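/- arXiv:2305.01139 — 3 statements merged into one kernel-verified Lean document; each statement's English description precedes it below -/
import Mathlib

section
/- For the selective classifier f_δ defined by rejecting exactly on the δε-margin region of f* (f_δ(x) = ⊥ if x ∈ N(f*, δε), else f_δ(x) = f*(x)), and for every α ∈ [0,1], the robust error with rejection of f_δ at α is at most the standard robust error of f* at budget ε' = max{(α+δ)ε, (1−δ)ε}. That is, R_ε(f_δ, α) ≤ Rob_{ε'}(f*). -/
open MeasureTheory Metric Set
open scoped Classical

/-!
A point that `rejectOnMargin f r` misclassifies is misclassified by `f` itself or lies within `r`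
of a point misclassified by `f`; this accounts for the budget `(α + δ) ε`. A point at distance
at most `ε` from `x` that `rejectOnMargin f (δ ε)` labels wrongly (without rejecting) is the centre
of a `δ ε`-ball on which `f` is constant and wrong, and in a real normed space this ball meets
`closedBall x ((1 - δ) ε)`; this accounts for the budget `(1 - δ) ε`.
-/

/-- The paper's `f_δ` is `rejectOnMargin f* (δ ε)`; `none` plays the role of the rejection `⊥`. -/
noncomputable def rejectOnMargin {X β : Type*} [PseudoMetricSpace X] (f : X → β) (r : ℝ)
    (x : X) : Option β :=
  if ∃ x' ∈ closedBall x r, f x' ≠ f x then none else some (f x)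

section RejectOnMargin

variable {X β : Type*} {f : X → β} {r : ℝ} {x : X} {y : β}

theorem rejectOnMargin_eq_some_iff [PseudoMetricSpace X] {b : β} :
    rejectOnMargin f r x = some b ↔ f x = b ∧ ∀ x' ∈ closedBall x r, f x' = f x := by
  unfold rejectOnMargin
  split_ifs with h
  · obtain ⟨x', hx', hne⟩ := h
    simp only [false_iff, not_and]
    exact fun _ hconst ↦ hne (hconst x' hx')
  · push Not at h
    simp only [Option.some.injEq]
    exact ⟨fun hb ↦ ⟨hb, h⟩, And.left⟩

theorem exists_mem_closedBall_ne_of_rejectOnMargin_ne_some [PseudoMetricSpace X] (hr : 0 ≤ r)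
    (h : rejectOnMargin f r x ≠ some y) : ∃ x' ∈ closedBall x r, f x' ≠ y := by
  by_cases hfx : f x = y
  · have hmargin : ∃ x' ∈ closedBall x r, f x' ≠ f x := by
      by_contra! hconst
      exact h (rejectOnMargin_eq_some_iff.2 ⟨hfx, hconst⟩)
    simpa only [hfx] using hmargin
  · exact ⟨x, mem_closedBall_self hr, hfx⟩

theorem exists_mem_closedBall_ne_of_rejectOnMargin_eq_some [SeminormedAddCommGroup X]
    [NormedSpace ℝ X] {x'' : X} {b : β} {s : ℝ} (hr : 0 ≤ r) (hs : 0 ≤ s)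
    (hx'' : dist x'' x ≤ s + r) (hb : rejectOnMargin f r x'' = some b) (hby : b ≠ y) :
    ∃ z ∈ closedBall x s, f z ≠ y := by
  obtain ⟨hfb, hconst⟩ := rejectOnMargin_eq_some_iff.1 hb
  obtain ⟨z, hzx'', hzx⟩ := exists_dist_le_le hr hs hx''
  refine ⟨z, hzx, ?_⟩
  rw [hconst z (mem_closedBall_comm.1 hzx''), hfb]
  exact hby

end RejectOnMargin

theorem stmt1_general {X : Type*} [NormedAddCommGroup X] [NormedSpace ℝ X] [MeasurableSpace X]
    (μ : Measure (X × Bool))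
    (fstar : X → Bool) (ε δ α : ℝ) (hε : 0 ≤ ε)
    (hδ : δ ∈ Set.Icc (0:ℝ) 1)
    (fδ : X → Option Bool)
    (hfδ : ∀ x, fδ x = if ∃ x' ∈ closedBall x (δ * ε), fstar x' ≠ fstar x then none
      else some (fstar x)) :
    μ {p : X × Bool | (∃ x' ∈ closedBall p.1 (α * ε), fδ x' ≠ some p.2) ∨
        ∃ x'' ∈ closedBall p.1 ε, fδ x'' ≠ some p.2 ∧ fδ x'' ≠ none}
      ≤ μ {p : X × Bool | ∃ x' ∈ closedBall p.1 (max ((α + δ) * ε) ((1 - δ) * ε)),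
          fstar x' ≠ p.2} := by
  obtain rfl : fδ = rejectOnMargin fstar (δ * ε) := funext hfδ
  have hδε : 0 ≤ δ * ε := mul_nonneg hδ.1 hε
  have h1δε : 0 ≤ (1 - δ) * ε := mul_nonneg (sub_nonneg.2 hδ.2) hε
  refine measure_mono fun ⟨x, y⟩ hp ↦ ?_
  rcases hp with ⟨x', hx', hne⟩ | ⟨x'', hx'', hne, hnn⟩
  · obtain ⟨z, hz, hzy⟩ := exists_mem_closedBall_ne_of_rejectOnMargin_ne_some hδε hne
    have hzx : dist z x ≤ δ * ε + α * ε := (dist_triangle z x' x).trans (add_le_add hz hx')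
    refine ⟨z, mem_closedBall.2 (hzx.trans ?_), hzy⟩
    linarith [le_max_left ((α + δ) * ε) ((1 - δ) * ε)]
  · obtain ⟨b, hb⟩ := Option.ne_none_iff_exists'.1 hnn
    have hx''x : dist x'' x ≤ (1 - δ) * ε + δ * ε := by
      rw [← add_mul, sub_add_cancel, one_mul]; exact hx''
    obtain ⟨z, hz, hzy⟩ := exists_mem_closedBall_ne_of_rejectOnMargin_eq_some hδε h1δε hx''x hb
      fun hby ↦ hne (hb.trans (congrArg some hby))
    exact ⟨z, closedBall_subset_closedBall (le_max_right _ _) hz, hzy⟩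

theorem stmt1 {X : Type*} [NormedAddCommGroup X] [NormedSpace ℝ X] [MeasurableSpace X]
    (μ : Measure (X × Bool)) [IsProbabilityMeasure μ]
    (fstar : X → Bool) (ε δ α : ℝ) (hε : 0 ≤ ε)
    (hδ : δ ∈ Set.Icc (0:ℝ) 1) (hα : α ∈ Set.Icc (0:ℝ) 1)
    (fδ : X → Option Bool)
    (hfδ : ∀ x, fδ x = if ∃ x' ∈ closedBall x (δ * ε), fstar x' ≠ fstar x then none
      else some (fstar x)) :
    μ {p : X × Bool | (∃ x' ∈ closedBall p.1 (α * ε), fδ x' ≠ some p.2) ∨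
        ∃ x'' ∈ closedBall p.1 ε, fδ x'' ≠ some p.2 ∧ fδ x'' ≠ none}
      ≤ μ {p : X × Bool | ∃ x' ∈ closedBall p.1 (max ((α + δ) * ε) ((1 - δ) * ε)),
          fstar x' ≠ p.2} :=
  stmt1_general μ fstar ε δ α hε hδ fδ hfδ
end

section
/- There exist a data distribution and a base classifier witnessing tightness of the margin-rejection bound: for the 1-dimensional distribution placing mass (1−β)/2 at (−4ε,−1), β/2 at (−αε/4,−1), β/2 at (αε/4,+1), and (1−β)/2 at (4ε,+1), with f*(x) = sign(x+ε) and δ = (1−α)/2 so that ε' = (1+α)ε/2, one has Rob_{ε'}(f*) = β/2, and every selective classifier f: ℝ → {−1,+1,⊥} satisfies R_ε(f, α) ≥ β/2. -/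
/-!
`f*` misclassifies the atom `(-αε/4, -1)` outright, while no perturbation of size `(1+α)ε/2 ≤ ε`
moves any of the other three atoms across the threshold `-ε`. For the lower bound, the atoms
`±αε/4` carry opposite labels and both lie within `αε` of `0`, so whatever `f` outputs at `0` is an
error for one of them, which costs mass `β/2`.
-/

open MeasureTheory Set

/-- `Rob_r(g) = μ (robustErrorSet g r)`. -/
def robustErrorSet (g : ℝ → Bool) (r : ℝ) : Set (ℝ × Bool) :=
  {p | ∃ x', |x' - p.1| ≤ r ∧ g x' ≠ p.2}

/-- `R_ε(f, α) = μ (selectiveErrorSet f (α * ε) ε)`; `none` encodes the rejection `⊥`. -/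
def selectiveErrorSet (f : ℝ → Option Bool) (r ρ : ℝ) : Set (ℝ × Bool) :=
  {p | (∃ x', |x' - p.1| ≤ r ∧ f x' ≠ some p.2) ∨
    ∃ x'', |x'' - p.1| ≤ ρ ∧ f x'' ≠ some p.2 ∧ f x'' ≠ none}

lemma exists_abs_sub_le_and_le_iff (x r c : ℝ) :
    (∃ x', |x' - x| ≤ r ∧ c ≤ x') ↔ 0 ≤ r ∧ c ≤ x + r := by
  constructor
  · rintro ⟨x', hx', hc⟩
    have := abs_le.mp hx'
    exact ⟨(abs_nonneg _).trans hx', by linarith⟩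
  · rintro ⟨hr, hc⟩
    exact ⟨x + r, by simp [abs_of_nonneg hr], hc⟩

lemma exists_abs_sub_le_and_lt_iff (x r c : ℝ) :
    (∃ x', |x' - x| ≤ r ∧ x' < c) ↔ 0 ≤ r ∧ x - r < c := by
  constructor
  · rintro ⟨x', hx', hc⟩
    have := abs_le.mp hx'
    exact ⟨(abs_nonneg _).trans hx', by linarith⟩
  · rintro ⟨hr, hc⟩
    exact ⟨x - r, by simp [abs_of_nonneg hr], hc⟩

section Threshold

variable (ε r x : ℝ)

lemma mem_robustErrorSet_threshold_false :
    (x, false) ∈ robustErrorSet (fun x => decide (0 ≤ x + ε)) r ↔ 0 ≤ r ∧ -ε ≤ x + r := by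
  have key := exists_abs_sub_le_and_le_iff x r (-ε)
  simp only [robustErrorSet, mem_ofPred_eq, ne_eq, decide_eq_false_iff_not, not_not]
  simpa only [neg_le_iff_add_nonneg] using key

lemma mem_robustErrorSet_threshold_true :
    (x, true) ∈ robustErrorSet (fun x => decide (0 ≤ x + ε)) r ↔ 0 ≤ r ∧ x - r < -ε := by
  have key := exists_abs_sub_le_and_lt_iff x r (-ε)
  simp only [robustErrorSet, mem_ofPred_eq, ne_eq, decide_eq_true_iff, not_le]
  simpa only [lt_neg_iff_add_neg] using key

end Threshold

lemma mem_selectiveErrorSet_or_of_abs_sub_le (f : ℝ → Option Bool) {r ρ x y z : ℝ}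
    (hx : |z - x| ≤ r) (hy : |z - y| ≤ r) :
    (x, false) ∈ selectiveErrorSet f r ρ ∨ (y, true) ∈ selectiveErrorSet f r ρ := by
  by_cases hz : f z = some false
  · exact Or.inr (Or.inl ⟨z, hy, by simp [hz]⟩)
  · exact Or.inl (Or.inl ⟨z, hx, hz⟩)

lemma sum_four_smul_dirac_apply {X : Type*} [MeasurableSpace X] [MeasurableSingletonClass X]
    (a b c d : ENNReal) (p q u v : X) (s : Set X) :
    (a • Measure.dirac p + b • Measure.dirac q + c • Measure.dirac u + d • Measure.dirac v) s
      = a * s.indicator 1 p + b * s.indicator 1 q + c * s.indicator 1 u + d * s.indicator 1 v := by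
  simp only [Measure.add_apply, Measure.smul_apply, Measure.dirac_apply, smul_eq_mul]

theorem stmt4_general (ε α β : ℝ) (hε : 0 < ε) (hα : α ∈ Set.Icc (0:ℝ) 1)
    (μ : Measure (ℝ × Bool))
    (hμ : μ = ENNReal.ofReal ((1 - β) / 2) • Measure.dirac ((-4 * ε, false) : ℝ × Bool)
      + ENNReal.ofReal (β / 2) • Measure.dirac ((-(α * ε / 4), false) : ℝ × Bool)
      + ENNReal.ofReal (β / 2) • Measure.dirac ((α * ε / 4, true) : ℝ × Bool)
      + ENNReal.ofReal ((1 - β) / 2) • Measure.dirac ((4 * ε, true) : ℝ × Bool))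
    (fstar : ℝ → Bool) (hf : ∀ x, fstar x = decide (0 ≤ x + ε)) :
    μ {p : ℝ × Bool | ∃ x', |x' - p.1| ≤ (1 + α) * ε / 2 ∧ fstar x' ≠ p.2}
      = ENNReal.ofReal (β / 2) ∧
    ∀ f : ℝ → Option Bool,
      ENNReal.ofReal (β / 2) ≤
        μ {p : ℝ × Bool | (∃ x', |x' - p.1| ≤ α * ε ∧ f x' ≠ some p.2) ∨
          ∃ x'', |x'' - p.1| ≤ ε ∧ f x'' ≠ some p.2 ∧ f x'' ≠ none} := by
  obtain ⟨hα0, hα1⟩ := hα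
  have hfstar : fstar = fun x => decide (0 ≤ x + ε) := funext hf
  have hαε : 0 ≤ α * ε := mul_nonneg hα0 hε.le
  have hαε' : α * ε ≤ ε := mul_le_of_le_one_left hε.le hα1
  set r := (1 + α) * ε / 2 with hr
  change μ (robustErrorSet fstar r) = _ ∧ ∀ f, _ ≤ μ (selectiveErrorSet f (α * ε) ε)
  subst hμ
  simp only [sum_four_smul_dirac_apply]
  constructor
  · have h₁ : (-4 * ε, false) ∉ robustErrorSet fstar r := by
      rw [hfstar, mem_robustErrorSet_threshold_false]; rintro ⟨-, h⟩; linarith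
    have h₂ : (-(α * ε / 4), false) ∈ robustErrorSet fstar r := by
      rw [hfstar, mem_robustErrorSet_threshold_false]; constructor <;> linarith
    have h₃ : (α * ε / 4, true) ∉ robustErrorSet fstar r := by
      rw [hfstar, mem_robustErrorSet_threshold_true]; rintro ⟨-, h⟩; linarith
    have h₄ : (4 * ε, true) ∉ robustErrorSet fstar r := by
      rw [hfstar, mem_robustErrorSet_threshold_true]; rintro ⟨-, h⟩; linarith
    rw [indicator_of_notMem h₁, indicator_of_mem h₂, indicator_of_notMem h₃, indicator_of_notMem h₄]
    simp
  · intro f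
    have hd : |0 - -(α * ε / 4)| ≤ α * ε ∧ |0 - α * ε / 4| ≤ α * ε := by
      constructor <;> rw [abs_le] <;> constructor <;> linarith
    rcases mem_selectiveErrorSet_or_of_abs_sub_le f hd.1 hd.2 with h | h
    · rw [indicator_of_mem h, Pi.one_apply, mul_one]
      exact le_add_right (le_add_right le_add_self)
    · rw [indicator_of_mem h, Pi.one_apply, mul_one]
      exact le_add_right (le_add_left le_rfl)

theorem stmt4 (ε α β : ℝ) (hε : 0 < ε) (hα : α ∈ Set.Icc (0:ℝ) 1)
    (hβ : β ∈ Set.Ioo (0:ℝ) (1/2))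
    (μ : Measure (ℝ × Bool))
    (hμ : μ = ENNReal.ofReal ((1 - β) / 2) • Measure.dirac ((-4 * ε, false) : ℝ × Bool)
      + ENNReal.ofReal (β / 2) • Measure.dirac ((-(α * ε / 4), false) : ℝ × Bool)
      + ENNReal.ofReal (β / 2) • Measure.dirac ((α * ε / 4, true) : ℝ × Bool)
      + ENNReal.ofReal ((1 - β) / 2) • Measure.dirac ((4 * ε, true) : ℝ × Bool))
    (fstar : ℝ → Bool) (hf : ∀ x, fstar x = decide (0 ≤ x + ε)) :
    μ {p : ℝ × Bool | ∃ x', |x' - p.1| ≤ (1 + α) * ε / 2 ∧ fstar x' ≠ p.2}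
      = ENNReal.ofReal (β / 2) ∧
    ∀ f : ℝ → Option Bool,
      ENNReal.ofReal (β / 2) ≤
        μ {p : ℝ × Bool | (∃ x', |x' - p.1| ≤ α * ε ∧ f x' ≠ some p.2) ∨
          ∃ x'', |x'' - p.1| ≤ ε ∧ f x'' ≠ some p.2 ∧ f x'' ≠ none} :=
  stmt4_general ε α β hε hα μ hμ fstar hf
end

section
/- For the margin-rejection classifier f_δ with δ ∈ [0,1/2] built from a zero-standard-error binary classifier f*, if a clean point x (with label y = f*(x)) is at distance greater than (1−δ)ε from the decision boundary of f*, then: (a) every perturbation x' with d(x,x') ≤ (1−2δ)ε satisfies f_δ(x') = y (correctly classified, not rejected), and (b) every perturbation x' with d(x,x') ≤ ε satisfies f_δ(x') ∈ {y, ⊥} (never misclassified). -/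
/-!
Write `b(x)` for the distance from `x` to the points of the other class. Along a segment `b`
decreases at most as fast as the distance travelled, so for `d(x, x') ≤ (1 - 2δ)ε` the point `x'`
stays in the class of `x` with `b(x') > δε`: it is classified correctly. If `x'` lies in the other
class, walking from `x'` towards `x` stays in the class of `x'` for a length `b(x')`, whence
`b(x) + b(x') ≤ d(x, x')`; with `d(x, x') ≤ ε` and `b(x) > (1 - δ)ε` this forces `b(x') < δε`,
so `x'` is rejected.
-/

open Metric Set
open scoped Classical

section BoundaryDist

variable {X β : Type*}

noncomputable def boundaryDist [PseudoMetricSpace X] (f : X → β) (x : X) : ℝ :=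
  infDist x {w | f w ≠ f x}

section PseudoMetric

variable [PseudoMetricSpace X] {f : X → β} {x x' : X}

theorem boundaryDist_le_dist_of_ne (h : f x' ≠ f x) : boundaryDist f x ≤ dist x x' :=
  infDist_le_dist_of_mem h

theorem eq_of_dist_lt_boundaryDist (h : dist x x' < boundaryDist f x) : f x' = f x := by
  by_contra hne
  exact (boundaryDist_le_dist_of_ne hne).not_gt h

theorem boundaryDist_le_add_dist_of_eq (h : f x' = f x) :
    boundaryDist f x ≤ boundaryDist f x' + dist x x' := by
  unfold boundaryDist
  rw [h]
  exact infDist_le_infDist_add_dist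

end PseudoMetric

theorem boundaryDist_add_boundaryDist_le_dist [NormedAddCommGroup X] [NormedSpace ℝ X]
    {f : X → β} {x x' : X} (h : f x' ≠ f x) :
    boundaryDist f x + boundaryDist f x' ≤ dist x x' := by
  set d := dist x x'
  have hbd : boundaryDist f x' ≤ d :=
    (boundaryDist_le_dist_of_ne h.symm).trans_eq (dist_comm x' x)
  have walk : ∀ r, 0 ≤ r → r < boundaryDist f x' → boundaryDist f x ≤ d - r := by
    intro r hr0 hrb
    have hd : 0 < d := by linarith
    set z := AffineMap.lineMap x' x (r / d)
    have hx'z : dist x' z = r := by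
      rw [dist_left_lineMap, Real.norm_of_nonneg (by positivity), dist_comm,
        div_mul_cancel₀ _ hd.ne']
    have hxz : dist x z = d - r := by
      have hrd : 0 ≤ 1 - r / d := by rw [sub_nonneg, div_le_one hd]; linarith
      rw [dist_comm, dist_lineMap_right, Real.norm_of_nonneg hrd, sub_mul, one_mul, dist_comm x',
        div_mul_cancel₀ _ hd.ne']
    have hfz : f z = f x' := eq_of_dist_lt_boundaryDist (hx'z ▸ hrb)
    exact hxz ▸ boundaryDist_le_dist_of_ne (hfz ▸ h)
  rw [← le_sub_iff_add_le']
  refine le_of_forall_lt_imp_le_of_dense fun c hc => ?_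
  rcases lt_or_ge c 0 with hc0 | hc0
  · linarith [boundaryDist_le_dist_of_ne h]
  · linarith [walk c hc0 hc]

end BoundaryDist

theorem stmt18 {X : Type*} [NormedAddCommGroup X] [NormedSpace ℝ X]
    (fstar : X → Bool) (ε δ : ℝ) (hε : 0 ≤ ε) (hδ : δ ∈ Set.Icc (0:ℝ) (1/2))
    (fδ : X → Option Bool)
    (hfδ : ∀ z, fδ z = if infDist z {w | fstar w ≠ fstar z} ≤ δ * ε then none
      else some (fstar z))
    (x : X) (y : Bool) (hy : fstar x = y)
    (hfar : (1 - δ) * ε < infDist x {w | fstar w ≠ fstar x}) :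
    (∀ x', dist x x' ≤ (1 - 2 * δ) * ε → fδ x' = some y) ∧
    (∀ x', dist x x' ≤ ε → fδ x' = some y ∨ fδ x' = none) := by
  subst hy
  change (1 - δ) * ε < boundaryDist fstar x at hfar
  change ∀ z, fδ z = if boundaryDist fstar z ≤ δ * ε then none else some (fstar z) at hfδ
  have hδε : 0 ≤ δ * ε := mul_nonneg hδ.1 hε
  refine ⟨fun x' hx' => ?_, fun x' hx' => ?_⟩
  · have hsame : fstar x' = fstar x := eq_of_dist_lt_boundaryDist (by linarith)
    have hlip := boundaryDist_le_add_dist_of_eq hsame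
    rw [hfδ, if_neg (by linarith), hsame]
  · rw [hfδ]
    split_ifs with hrej
    · exact Or.inr rfl
    · refine Or.inl (congrArg some (by_contra fun hne => ?_))
      linarith [boundaryDist_add_boundaryDist_le_dist hne]
end
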